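/- For every natural number t ≥ 0, both (3t+2, 2t+2) and (5t+4, 2t+2) are reachable from (1,1) under the maps Ĝ(x,y)=(x+y,y) and Ŝ(x,y)=(3x−2y+1,2x−y+1). -/

import Mathlib

def Ghat (p : ℤ × ℤ) : ℤ × ℤ := (p.1 + p.2, p.2)

def Shat (p : ℤ × ℤ) : ℤ × ℤ := (3 * p.1 - 2 * p.2 + 1, 2 * p.1 - p.2 + 1)

def applyWord (w : List Bool) (p : ℤ × ℤ) : ℤ × ℤ :=
  w.foldr (fun b q => if b then Shat q else Ghat q) p

def Reachable (p : ℤ × ℤ) : Prop := ∃ w : List Bool, applyWord w (1, 1) = p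

/-! Starting from `(1, 1)`, the map `Ĝ` reaches every `(n + 1, 1)`; one application of `Ŝ` then
gives `(3n + 2, 2n + 2)`, and one further application of `Ĝ` gives `(5n + 4, 2n + 2)`. -/

namespace Reachable

theorem one_one : Reachable (1, 1) := ⟨[], rfl⟩

theorem ghat {p : ℤ × ℤ} : Reachable p → Reachable (Ghat p)
  | ⟨w, hw⟩ => ⟨false :: w, congrArg Ghat hw⟩

theorem shat {p : ℤ × ℤ} : Reachable p → Reachable (Shat p)
  | ⟨w, hw⟩ => ⟨true :: w, congrArg Shat hw⟩

theorem natCast_add_one_one (n : ℕ) : Reachable ((n : ℤ) + 1, 1) := by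
  induction n with
  | zero => simpa using one_one
  | succ k ih => simpa [Ghat] using ih.ghat

end Reachable

theorem reachable_3t2_5t4 (t : ℤ) (ht : 0 ≤ t) :
    Reachable (3 * t + 2, 2 * t + 2) ∧ Reachable (5 * t + 4, 2 * t + 2) := by
  lift t to ℕ using ht
  have hS : Reachable (3 * (t : ℤ) + 2, 2 * t + 2) := by
    convert (Reachable.natCast_add_one_one t).shat using 1
    ext <;> simp only [Shat] <;> ring
  refine ⟨hS, ?_⟩
  convert hS.ghat using 1
  ext <;> simp only [Ghat]
  ring
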